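/- Let H ≻ 0 symmetric, 0 ⪯ H_w ⪯ H, λ > 0, H_λ = H + λI, σ_max the largest eigenvalue of H. Then the matrix Λ := ½ H_λ^{1/2}(H_λ − H_w)^{-1} H_w (H_λ − H_w)^{-1} H_λ^{1/2} is symmetric with eigenvalues bounded between 0 and σ_max(σ_max + λ)/(2λ²). -/

import Mathlib

/-!
In the Loewner order, `H_w ⪯ H ⪯ σ_max I` and `H_λ − H_w = (H − H_w) + λI ⪰ λI`. The latter gives
`(H_λ − H_w)² ⪰ λ² I`, hence `(H_λ − H_w)⁻² ⪯ λ⁻² I`. Conjugating twice,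
`Λ ⪯ (σ_max/2) H_λ^{1/2} (H_λ − H_w)⁻² H_λ^{1/2} ⪯ σ_max/(2λ²) H_λ ⪯ σ_max (σ_max + λ)/(2λ²) I`,
while `Λ ⪰ 0` as a congruence of `H_w ⪰ 0`. A matrix between `0` and `c I` is symmetric with
spectrum in `[0, c]`.
-/

open Matrix

/-- The positive semidefinite square root of a positive semidefinite matrix
(the definition `Matrix.PosSemidef.sqrt` of the older Mathlib, removed since). -/
noncomputable def Matrix.PosSemidef.sqrt {n : Type*} [Fintype n] [DecidableEq n]
    {A : Matrix n n ℝ} (hA : A.PosSemidef) : Matrix n n ℝ :=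
  hA.1.eigenvectorUnitary.1 * diagonal ((↑) ∘ (√·) ∘ hA.1.eigenvalues) *
  (star hA.1.eigenvectorUnitary : Matrix n n ℝ)

open scoped MatrixOrder ComplexOrder

namespace Matrix

variable {n 𝕜 : Type*} [DecidableEq n] [RCLike 𝕜]

theorem posDef_of_smul_one_le {A : Matrix n n 𝕜} {l : ℝ} (hl : 0 < l)
    (h : l • (1 : Matrix n n 𝕜) ≤ A) : A.PosDef := by
  simpa using PosDef.posSemidef_add (sub_nonneg.2 h).posSemidef (PosDef.one.smul hl)

variable [Fintype n]

theorem PosSemidef.sqrt_eq_cfcSqrt {A : Matrix n n ℝ} (hA : A.PosSemidef) :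
    hA.sqrt = CFC.sqrt A := by
  rw [CFC.sqrt_eq_real_sqrt A hA.nonneg, cfcₙ_eq_cfc, hA.1.cfc_eq]
  rfl

theorem PosSemidef.posSemidef_sqrt {A : Matrix n n ℝ} (hA : A.PosSemidef) :
    hA.sqrt.PosSemidef := by
  rw [hA.sqrt_eq_cfcSqrt]
  exact (CFC.sqrt_nonneg A).posSemidef

theorem PosSemidef.sqrt_mul_self {A : Matrix n n ℝ} (hA : A.PosSemidef) :
    hA.sqrt * hA.sqrt = A := by
  rw [hA.sqrt_eq_cfcSqrt]
  exact CFC.sqrt_mul_sqrt_self A hA.nonneg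

theorem le_smul_one_of_spectrum_le {A : Matrix n n 𝕜} (hA : A.IsHermitian) {c : ℝ}
    (h : ∀ μ ∈ spectrum ℝ A, μ ≤ c) : A ≤ c • (1 : Matrix n n 𝕜) := by
  rw [← Algebra.algebraMap_eq_smul_one]
  exact le_algebraMap_of_spectrum_le h hA.isSelfAdjoint

theorem spectrum_subset_Icc_of_nonneg_of_le_smul_one {A : Matrix n n 𝕜} {c : ℝ} (h0 : 0 ≤ A)
    (hc : A ≤ c • (1 : Matrix n n 𝕜)) : spectrum ℝ A ⊆ Set.Icc 0 c := by
  rw [← Algebra.algebraMap_eq_smul_one,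
    le_algebraMap_iff_spectrum_le (IsSelfAdjoint.of_nonneg h0)] at hc
  exact fun μ hμ => ⟨spectrum_nonneg_of_nonneg h0 hμ, hc μ hμ⟩

theorem inv_mul_inv_le_of_smul_one_le {A : Matrix n n 𝕜} {l : ℝ} (hl : 0 < l)
    (h : l • (1 : Matrix n n 𝕜) ≤ A) : A⁻¹ * A⁻¹ ≤ (l ^ 2)⁻¹ • (1 : Matrix n n 𝕜) := by
  have hA := posDef_of_smul_one_le hl h
  have hdet : IsUnit A.det := (isUnit_iff_isUnit_det A).mp hA.isUnit
  have hsq : (l ^ 2) • (1 : Matrix n n 𝕜) ≤ A * A := by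
    rw [← sub_nonneg, show A * A - (l ^ 2) • 1 = (A - l • 1) * (A - l • 1) + (2 * l) • (A - l • 1) by
      simp only [sub_mul, mul_sub, smul_mul_assoc, mul_smul_comm, Matrix.one_mul, Matrix.mul_one]
      module]
    exact add_nonneg (IsSelfAdjoint.of_nonneg (sub_nonneg.2 h)).mul_self_nonneg
      (smul_nonneg (by positivity) (sub_nonneg.2 h))
  have hconj := hA.isHermitian.inv.isSelfAdjoint.conjugate_le_conjugate hsq
  rw [Matrix.mul_smul, Matrix.mul_one, Matrix.smul_mul, ← Matrix.mul_assoc,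
    nonsing_inv_mul A hdet, Matrix.one_mul, mul_nonsing_inv A hdet] at hconj
  calc A⁻¹ * A⁻¹ = (l ^ 2)⁻¹ • ((l ^ 2) • (A⁻¹ * A⁻¹)) := by
        rw [smul_smul, inv_mul_cancel₀ (by positivity), one_smul]
    _ ≤ (l ^ 2)⁻¹ • (1 : Matrix n n 𝕜) := smul_le_smul_of_nonneg_left hconj (by positivity)

theorem conj_inv_conj_nonneg {B W S : Matrix n n 𝕜} (hB : B.IsHermitian) (hW : 0 ≤ W)
    (hS : IsSelfAdjoint S) : 0 ≤ S * B⁻¹ * W * B⁻¹ * S := by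
  simpa only [Matrix.mul_assoc] using
    hS.conjugate_nonneg (hB.inv.isSelfAdjoint.conjugate_nonneg hW)

theorem conj_inv_conj_le_smul_one {B W S : Matrix n n 𝕜} {l σ τ : ℝ} (hl : 0 < l) (hσ : 0 ≤ σ)
    (hB : l • (1 : Matrix n n 𝕜) ≤ B) (hW : W ≤ σ • (1 : Matrix n n 𝕜)) (hS : IsSelfAdjoint S)
    (hSS : S * S ≤ τ • (1 : Matrix n n 𝕜)) :
    S * B⁻¹ * W * B⁻¹ * S ≤ (σ * τ / l ^ 2) • (1 : Matrix n n 𝕜) := by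
  have hBinv : IsSelfAdjoint B⁻¹ := (posDef_of_smul_one_le hl hB).isHermitian.inv.isSelfAdjoint
  calc S * B⁻¹ * W * B⁻¹ * S = S * (B⁻¹ * W * B⁻¹) * S := by simp only [Matrix.mul_assoc]
    _ ≤ S * (B⁻¹ * (σ • 1) * B⁻¹) * S :=
        hS.conjugate_le_conjugate (hBinv.conjugate_le_conjugate hW)
    _ = σ • (S * (B⁻¹ * B⁻¹) * S) := by
        rw [Matrix.mul_smul, Matrix.mul_one, Matrix.smul_mul, Matrix.mul_smul, Matrix.smul_mul]
    _ ≤ σ • (S * ((l ^ 2)⁻¹ • 1) * S) :=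
        smul_le_smul_of_nonneg_left
          (hS.conjugate_le_conjugate (inv_mul_inv_le_of_smul_one_le hl hB)) hσ
    _ = (σ / l ^ 2) • (S * S) := by
        rw [Matrix.mul_smul, Matrix.mul_one, Matrix.smul_mul, smul_smul, div_eq_mul_inv]
    _ ≤ (σ / l ^ 2) • (τ • 1) := smul_le_smul_of_nonneg_left hSS (by positivity)
    _ = (σ * τ / l ^ 2) • (1 : Matrix n n 𝕜) := by rw [smul_smul, div_mul_eq_mul_div]

end Matrix

/-- With `0 ⪯ H_w ⪯ H`, `λ > 0`, `H_λ = H + λI`, `σ_max` the largest eigenvalue of `H`,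
the matrix `Λ := ½ H_λ¹ᐟ² (H_λ − H_w)⁻¹ H_w (H_λ − H_w)⁻¹ H_λ¹ᐟ²` is symmetric with
eigenvalues in `[0, σ_max (σ_max + λ)/(2λ²)]`. -/
theorem stmt13 (d : ℕ) (H Hw : Matrix (Fin d) (Fin d) ℝ) (l σmax : ℝ)
    (hH : H.PosSemidef) (hHw : Hw.PosSemidef) (hle : (H - Hw).PosSemidef)
    (hl : 0 < l)
    (hP : (H + l • (1 : Matrix (Fin d) (Fin d) ℝ)).PosSemidef)
    (hσ_mem : σmax ∈ spectrum ℝ H) (hσ_max : ∀ μ ∈ spectrum ℝ H, μ ≤ σmax) :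
    ((1 / 2 : ℝ) • (hP.sqrt * ((H + l • (1 : Matrix (Fin d) (Fin d) ℝ)) - Hw)⁻¹ * Hw *
        ((H + l • (1 : Matrix (Fin d) (Fin d) ℝ)) - Hw)⁻¹ * hP.sqrt)).IsSymm ∧
    ∀ μ ∈ spectrum ℝ
        ((1 / 2 : ℝ) • (hP.sqrt * ((H + l • (1 : Matrix (Fin d) (Fin d) ℝ)) - Hw)⁻¹ * Hw *
          ((H + l • (1 : Matrix (Fin d) (Fin d) ℝ)) - Hw)⁻¹ * hP.sqrt)),
      μ ∈ Set.Icc (0 : ℝ) (σmax * (σmax + l) / (2 * l ^ 2)) := by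
  set B := H + l • (1 : Matrix (Fin d) (Fin d) ℝ) - Hw
  have hS := hP.posSemidef_sqrt.isHermitian.isSelfAdjoint
  have hσ : 0 ≤ σmax := spectrum_nonneg_of_nonneg hH.nonneg hσ_mem
  have hHσ : H ≤ σmax • 1 := le_smul_one_of_spectrum_le hH.isHermitian hσ_max
  have hB : l • 1 ≤ B := by
    rw [le_iff, show B - l • 1 = H - Hw by simp only [B]; abel]
    exact hle
  have hΛ0 : 0 ≤ (1 / 2 : ℝ) • (hP.sqrt * B⁻¹ * Hw * B⁻¹ * hP.sqrt) := smul_nonneg (by norm_num)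
    (conj_inv_conj_nonneg (posDef_of_smul_one_le hl hB).isHermitian hHw.nonneg hS)
  have hSS : hP.sqrt * hP.sqrt ≤ (σmax + l) • 1 := by
    rw [hP.sqrt_mul_self, add_smul]
    exact add_le_add hHσ le_rfl
  have hΛle := smul_le_smul_of_nonneg_left (a := (1 / 2 : ℝ))
    (conj_inv_conj_le_smul_one hl hσ hB ((le_iff.2 hle).trans hHσ) hS hSS) (by norm_num)
  rw [smul_smul, show 1 / 2 * (σmax * (σmax + l) / l ^ 2) = σmax * (σmax + l) / (2 * l ^ 2) by
    field_simp] at hΛle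
  exact ⟨isHermitian_iff_isSymm.mp hΛ0.posSemidef.isHermitian,
    fun μ hμ => spectrum_subset_Icc_of_nonneg_of_le_smul_one hΛ0 hΛle hμ⟩
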